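/- arXiv:2310.13541 — 2 statements merged into one kernel-verified Lean document; each statement's English description precedes it below -/
import Mathlib

section
/- Barbalat's lemma: if g : ℝ → ℝ is continuously differentiable, g(t) converges to a finite limit as t → ∞, and g' is uniformly continuous on [0,∞), then g'(t) → 0 as t → ∞. -/
/-!
Fix `ε > 0` and a window length `d` so short that uniform continuity keeps `g'` within `ε / 2`
of `g' t` on `[t, t + d]`. The mean value inequality then gives
`‖g (t + d) - g t - d • g' t‖ ≤ d ε / 2`, and since `g` converges, `g (t + d) - g t → 0`;
hence `‖g' t‖ < ε` for all large `t`.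
-/

open Filter Set Topology

variable {E : Type*} [NormedAddCommGroup E] [NormedSpace ℝ E]

omit [NormedSpace ℝ E] in
lemma Filter.Tendsto.sub_comp_add_const {f : ℝ → E} {L : E} (hf : Tendsto f atTop (𝓝 L))
    (d : ℝ) : Tendsto (fun t ↦ f (t + d) - f t) atTop (𝓝 0) := by
  simpa using (hf.comp (tendsto_atTop_add_const_right _ d tendsto_id)).sub hf

/-- Mean value inequality applied to `x ↦ f x - (x - a) • deriv f a`. -/
lemma norm_sub_sub_smul_deriv_le {f : ℝ → E} (hf : Differentiable ℝ f) {a b C : ℝ}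
    (hab : a ≤ b) (hC : ∀ x ∈ Ico a b, ‖deriv f x - deriv f a‖ ≤ C) :
    ‖f b - f a - (b - a) • deriv f a‖ ≤ C * (b - a) := by
  have hderiv : ∀ x ∈ Icc a b, HasDerivWithinAt (fun y ↦ f y - (y - a) • deriv f a)
      (deriv f x - deriv f a) (Icc a b) x := fun x _ ↦ by
    simpa only [one_smul] using ((hf x).hasDerivAt.fun_sub
      (((hasDerivAt_id' x).sub_const a).smul_const (deriv f a))).hasDerivWithinAt
  rw [sub_right_comm]
  simpa using norm_image_sub_le_of_norm_deriv_le_segment' hderiv hC b (right_mem_Icc.2 hab)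

theorem tendsto_deriv_atTop_zero_of_uniformContinuousOn {f : ℝ → E} {a : ℝ} {L : E}
    (hf : Differentiable ℝ f) (huc : UniformContinuousOn (deriv f) (Ici a))
    (hL : Tendsto f atTop (𝓝 L)) : Tendsto (deriv f) atTop (𝓝 0) := by
  refine Metric.tendsto_nhds.2 fun ε hε ↦ ?_
  obtain ⟨δ, hδ, hclose⟩ := Metric.uniformContinuousOn_iff.1 huc (ε / 2) (half_pos hε)
  obtain ⟨d, hd, hdδ⟩ : ∃ d, 0 < d ∧ d < δ := ⟨δ / 2, half_pos hδ, half_lt_self hδ⟩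
  have hsmall : ∀ᶠ t in atTop, ‖f (t + d) - f t‖ < d * (ε / 2) :=
    (hL.sub_comp_add_const d).norm.eventually (gt_mem_nhds (by rw [norm_zero]; positivity))
  filter_upwards [hsmall, eventually_ge_atTop a] with t hsmall ht
  have hwindow : ∀ x ∈ Ico t (t + d), ‖deriv f x - deriv f t‖ ≤ ε / 2 := fun x hx ↦ by
    rw [← dist_eq_norm]
    refine (hclose x (ht.trans hx.1) t ht ?_).le
    rw [Real.dist_eq, abs_of_nonneg (sub_nonneg.2 hx.1)]
    linarith [hx.2]
  have hmvt := norm_sub_sub_smul_deriv_le hf (le_add_of_nonneg_right hd.le) hwindow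
  rw [add_sub_cancel_left] at hmvt
  have : d * ‖deriv f t‖ < d * ε := calc
    d * ‖deriv f t‖ = ‖d • deriv f t‖ := by rw [norm_smul, Real.norm_of_nonneg hd.le]
    _ ≤ ‖f (t + d) - f t‖ + ‖f (t + d) - f t - d • deriv f t‖ := by
      simpa using norm_sub_le (f (t + d) - f t) (f (t + d) - f t - d • deriv f t)
    _ < d * (ε / 2) + ε / 2 * d := add_lt_add_of_lt_of_le hsmall hmvt
    _ = d * ε := by ring
  simpa using lt_of_mul_lt_mul_left this hd.le

/-- Barbalat's lemma: if `g : ℝ → ℝ` is continuously differentiable, `g(t)` converges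
to a finite limit as `t → ∞`, and `g'` is uniformly continuous on `[0, ∞)`, then
`g'(t) → 0` as `t → ∞`. -/
theorem stmt_13 (g : ℝ → ℝ) (hg : ContDiff ℝ 1 g)
    (huc : UniformContinuousOn (deriv g) (Set.Ici 0))
    (hlim : ∃ L : ℝ, Tendsto g atTop (nhds L)) :
    Tendsto (deriv g) atTop (nhds 0) := by
  obtain ⟨L, hL⟩ := hlim
  exact tendsto_deriv_atTop_zero_of_uniformContinuousOn (hg.differentiable one_ne_zero) huc hL
end

section
/- If a block matrix P = [[2k₁k₂L, k₁I], [k₁I, k₂I]] where L is symmetric PSD with λ₂ > 0 on the complement of span(1), then P restricted to vectors y = (e, δ) with eᵀ1 = 0 is positive definite provided k₁, k₂ > 0 and k₁/(2k₂²) < λ₂. -/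
open Matrix

/-- If `L` is symmetric PSD with `L·1 = 0` and `xᵀLx ≥ λ₂‖x‖²` for all `x ⊥ 1`,
with `λ₂ > 0`, `k₁, k₂ > 0` and `k₁/(2k₂²) < λ₂`, then the block quadratic form of
`P = [[2k₁k₂L, k₁I], [k₁I, k₂I]]` is positive definite on vectors `(e, δ)` with
`eᵀ1 = 0`. -/
theorem stmt_17 {N : ℕ} (L : Matrix (Fin N) (Fin N) ℝ)
    (hsymm : Lᵀ = L)
    (hpsd : ∀ x : Fin N → ℝ, 0 ≤ x ⬝ᵥ L.mulVec x)
    (hker : L.mulVec (fun _ => 1) = 0)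
    (lam2 k1 k2 : ℝ) (hlam2 : 0 < lam2)
    (hlow : ∀ x : Fin N → ℝ, x ⬝ᵥ (fun _ => (1 : ℝ)) = 0 →
      lam2 * (x ⬝ᵥ x) ≤ x ⬝ᵥ L.mulVec x)
    (hk1 : 0 < k1) (hk2 : 0 < k2) (hgain : k1 / (2 * k2 ^ 2) < lam2) :
    ∀ e δ : Fin N → ℝ, e ⬝ᵥ (fun _ => (1 : ℝ)) = 0 → ¬(e = 0 ∧ δ = 0) →
      0 < 2 * k1 * k2 * (e ⬝ᵥ L.mulVec e) + 2 * k1 * (e ⬝ᵥ δ) + k2 * (δ ⬝ᵥ δ) := by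
  intro e δ horth hne
  have hLe := hlow e horth
  have hee : 0 ≤ e ⬝ᵥ e :=
    Finset.sum_nonneg (fun i _ => mul_self_nonneg (e i))
  have hdd : 0 ≤ δ ⬝ᵥ δ :=
    Finset.sum_nonneg (fun i _ => mul_self_nonneg (δ i))
  -- key square inequality: 0 ≤ ∑ (k1 e i + k2 δ i)^2
  have hsq : 0 ≤ k1^2 * (e ⬝ᵥ e) + 2*k1*k2 * (e ⬝ᵥ δ) + k2^2 * (δ ⬝ᵥ δ) := by
    have h0 : 0 ≤ ∑ i, (k1 * e i + k2 * δ i)^2 :=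
      Finset.sum_nonneg (fun i _ => sq_nonneg _)
    have heq : ∑ i, (k1 * e i + k2 * δ i)^2
        = k1^2 * (e ⬝ᵥ e) + 2*k1*k2 * (e ⬝ᵥ δ) + k2^2 * (δ ⬝ᵥ δ) := by
      simp only [dotProduct, Finset.mul_sum, ← Finset.sum_add_distrib]
      exact Finset.sum_congr rfl (fun i _ => by ring)
    linarith [heq ▸ h0]
  have hgain' : k1 < 2 * k2^2 * lam2 := by
    have h := (div_lt_iff₀ (by positivity)).mp hgain
    linarith
  by_cases he : e = 0
  · have hδ : δ ≠ 0 := fun h => hne ⟨he, h⟩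
    have hdpos : 0 < δ ⬝ᵥ δ :=
      lt_of_le_of_ne hdd (Ne.symm ((dotProduct_self_eq_zero (v := δ)).not.mpr hδ))
    subst he
    simp only [zero_dotProduct, dotProduct_zero, mul_zero, zero_add, Matrix.mulVec_zero]
    · positivity
  · have hepos : 0 < e ⬝ᵥ e :=
      lt_of_le_of_ne hee (Ne.symm ((dotProduct_self_eq_zero (v := e)).not.mpr he))
    have hmul : 0 < k2 * (2 * k1 * k2 * (e ⬝ᵥ L.mulVec e) + 2 * k1 * (e ⬝ᵥ δ)
        + k2 * (δ ⬝ᵥ δ)) := by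
      nlinarith [hsq, hLe, hepos, hgain', hk1, hk2,
        mul_pos hepos (mul_pos hk1 (sub_pos.mpr hgain')),
        mul_le_mul_of_nonneg_left hLe (le_of_lt (by positivity : (0:ℝ) < 2*k1*k2^2))]
    rcases mul_pos_iff.mp hmul with ⟨_, h⟩ | ⟨h, _⟩
    · exact h
    · linarith
end
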